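/- For normalized disjunctive multiplicity expressions E_1 and E_2, L(E_2) ⊆ L(E_1) if and only if C_{E_1} ⊆ C_{E_2}, N_{E_2} ⊆ N_{E_1}, and P_{E_1} ⊆ P_{E_2}. -/

import Mathlib

open scoped Classical

variable {α : Type}

/-- Unordered words: multisets of symbols, as occurrence-count functions. -/
abbrev UWord (α : Type) := α → ℕ

/-- Multiplicities `*`, `+`, `?`, `0`, `1`. -/
inductive Mult : Type where
  | zero | one | opt | plus | star
deriving DecidableEq

/-- Interpretation of multiplicities as sets of natural numbers. -/
def Mult.sem : Mult → Set ℕ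
  | .zero => {0}
  | .one => {1}
  | .opt => {0, 1}
  | .plus => {n | 0 < n}
  | .star => Set.univ

/-- A disjunction `a₁^{M₁} | … | a_k^{M_k}`. -/
abbrev Disj (α : Type) := List (α × Mult)

/-- A disjunctive multiplicity expression `D₁^{M₁} ⊎ … ⊎ D_n^{M_n}`. -/
abbrev DME (α : Type) := List (Disj α × Mult)

/-- Language of `a^M`. -/
def singleLang (a : α) (m : Mult) : Set (UWord α) :=
  {w | w a ∈ m.sem ∧ ∀ b, b ≠ a → w b = 0}

/-- Language of a disjunction. -/
def disjLang (D : Disj α) : Set (UWord α) :=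
  {w | ∃ p ∈ D, w ∈ singleLang p.1 p.2}

/-- Pointwise (multiset) sum of a list of unordered words. -/
def sumWords (ws : List (UWord α)) : UWord α := fun a => (ws.map (fun u => u a)).sum

/-- Language of `D^M`. -/
def powLang (L : Set (UWord α)) (m : Mult) : Set (UWord α) :=
  {w | ∃ ws : List (UWord α), ws.length ∈ m.sem ∧ (∀ u ∈ ws, u ∈ L) ∧ w = sumWords ws}

/-- Language of a disjunctive multiplicity expression. -/
def dmeLang (E : DME α) : Set (UWord α) :=
  {w | ∃ ws : List (UWord α),
      List.Forall₂ (fun p u => u ∈ powLang (disjLang p.1) p.2) E ws ∧ w = sumWords ws}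

/-- Symbols occurring in a disjunctive multiplicity expression. -/
def dmeSymbols (E : DME α) : List α := E.flatMap (fun p => p.1.map Prod.fst)

/-- Normalized disjunctive multiplicity expression (each symbol occurs at most once,
each disjunction nonempty, and the two normal-form conditions of the paper). -/
def Normalized (E : DME α) : Prop :=
  (dmeSymbols E).Nodup ∧
  ∀ p ∈ E, p.1 ≠ [] ∧
    (p.2 ≠ Mult.one → p.2 = Mult.plus ∧ ∀ q ∈ p.1, q.2 = Mult.one) ∧
    ((∃ q ∈ p.1, (0 : ℕ) ∈ q.2.sem) → ∀ q ∈ p.1, (0 : ℕ) ∈ q.2.sem)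

/-- Conflicting pairs of siblings `C_E`. -/
def CE (E : DME α) : Set (α × α) :=
  {p | ¬ ∃ w ∈ dmeLang E, w p.1 ≠ 0 ∧ w p.2 ≠ 0}

/-- Extended cardinality map `N_E`. -/
def NE (E : DME α) : Set (α × ℕ) :=
  {p | ∃ w ∈ dmeLang E, w p.1 = p.2}

/-- Sets of required symbols `P_E`. -/
def PE (E : DME α) : Set (Set α) :=
  {X | ∀ w ∈ dmeLang E, ∃ a ∈ X, w a ≠ 0}

/-- Consistency of an unordered word with a characterizing triple. -/
def ConsTriple (w : UWord α) (C : Set (α × α)) (N : Set (α × ℕ)) (P : Set (Set α)) : Prop :=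
  (∀ p ∈ C, ¬ (w p.1 ≠ 0 ∧ w p.2 ≠ 0)) ∧
  (∀ a, (a, w a) ∈ N) ∧
  (∀ X ∈ P, ∃ a ∈ X, w a ≠ 0)

/-- Language of a disjunction-free multiplicity expression given as a list of
symbol/multiplicity pairs. -/
def dfLang (l : List (α × Mult)) : Set (UWord α) :=
  {w | (∀ p ∈ l, w p.1 ∈ p.2.sem) ∧ ∀ b, b ∉ l.map Prod.fst → w b = 0}

/-- Finite unordered trees. -/
inductive UTree (α : Type) : Type where
  | node : α → List (UTree α) → UTree α

def UTree.lab : UTree α → α | .node a _ => a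

def UTree.children : UTree α → List (UTree α) | .node _ ts => ts

/-- Twig queries: labels in `Σ ∪ {⋆}` (wildcard = `none`); each child subquery is tagged
with `false` for a child edge and `true` for a descendant edge. -/
inductive Twig (α : Type) : Type where
  | node : Option α → List (Twig α × Bool) → Twig α

/-- Proper subtree (proper descendant) relation. -/
inductive StrictDesc : UTree α → UTree α → Prop where
  | child {s t : UTree α} : s ∈ t.children → StrictDesc s t
  | step {s u t : UTree α} : StrictDesc s u → u ∈ t.children → StrictDesc s t

/-- `Sat t q`: the twig query `q` can be embedded in the tree `t`
(root to root, child edges to child edges, descendant edges to proper descendants,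
labels preserved up to wildcard). -/
def Sat : UTree α → Twig α → Prop
  | t, .node l qs =>
      (∀ x ∈ l, x = t.lab) ∧
      ∀ p ∈ qs, (p.2 = false → ∃ t' ∈ t.children, Sat t' p.1) ∧
                (p.2 = true → ∃ t', StrictDesc t' t ∧ Sat t' p.1)
termination_by t q => sizeOf q
decreasing_by
  all_goals
    obtain ⟨q', b'⟩ := p
    have h1 : sizeOf ((q', b') : Twig α × Bool) < sizeOf qs := List.sizeOf_lt_of_mem (by assumption)
    simp at h1 ⊢
    omega

/-- `TEmb t' t` : the tree `t'` can be embedded in the tree `t` (root-, child-, and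
label-preserving). -/
def TEmb : UTree α → UTree α → Prop
  | .node a ts', t => t.lab = a ∧ ∀ s' ∈ ts', ∃ s ∈ t.children, TEmb s' s

/-- `QGEmb E a q` : the twig query `q` can be embedded in the rooted graph with edge
relation `E` at root `a`. -/
def QGEmb (E : α → α → Prop) : α → Twig α → Prop
  | a, .node l qs =>
      (∀ x ∈ l, x = a) ∧
      ∀ p ∈ qs, (p.2 = false → ∃ b, E a b ∧ QGEmb E b p.1) ∧
                (p.2 = true → ∃ b, Relation.TransGen E a b ∧ QGEmb E b p.1)
termination_by a q => sizeOf q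
decreasing_by
  all_goals
    obtain ⟨q', b'⟩ := p
    have h1 : sizeOf ((q', b') : Twig α × Bool) < sizeOf qs := List.sizeOf_lt_of_mem (by assumption)
    simp at h1 ⊢
    omega

/-- Labeled paths of a tree: sequences of labels along root-to-node paths. -/
inductive IsLabPath : UTree α → List α → Prop where
  | root {a : α} {ts : List (UTree α)} : IsLabPath (UTree.node a ts) [a]
  | cons {a : α} {ts : List (UTree α)} {s : UTree α} {p : List α} :
      s ∈ ts → IsLabPath s p → IsLabPath (UTree.node a ts) (a :: p)

/-- Paths of a rooted graph: nonempty vertex sequences starting at the root and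
following edges. -/
def IsGPath (E : α → α → Prop) (root : α) (p : List α) : Prop :=
  p ≠ [] ∧ p.head? = some root ∧ p.Chain' E

/-- The unfolding of a rooted graph, truncated at depth `n`.  For a graph with no cycle
reachable from the root, taking `n = Fintype.card α` yields the full unfolding. -/
noncomputable def unfoldG [Fintype α] (E : α → α → Prop) : ℕ → α → UTree α
  | 0, a => .node a []
  | n + 1, a => .node a (((Finset.univ.filter fun b => E a b).toList).map (unfoldG E n))

/-- Number of leaves of a tree. -/
def leafCount : UTree α → ℕ
  | .node _ ts => if ts.isEmpty then 1 else (ts.attach.map (fun s => leafCount s.1)).sum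
decreasing_by
  have h1 := List.sizeOf_lt_of_mem s.2
  simp
  omega

/-- Disjunction-free multiplicity schema: a root label together with, for each label `a`,
a disjunction-free multiplicity expression given as the multiplicity `R a b` of every
symbol `b` (`Mult.zero` meaning `b` does not occur). -/
structure MS (α : Type) where
  root : α
  R : α → α → Mult

/-- Every node's children-label multiset matches the rule for the node's label. -/
inductive LocalOK [DecidableEq α] (R : α → α → Mult) : UTree α → Prop where
  | node {a : α} {ts : List (UTree α)} :
      (∀ b, ((ts.map UTree.lab).count b) ∈ (R a b).sem) →
      (∀ s ∈ ts, LocalOK R s) →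
      LocalOK R (UTree.node a ts)

/-- A tree satisfies a disjunction-free multiplicity schema. -/
def SatS [DecidableEq α] (S : MS α) (t : UTree α) : Prop :=
  t.lab = S.root ∧ LocalOK S.R t

/-- Edges of the universal dependency graph: `b` occurs in `R a` with multiplicity `+` or `1`. -/
def uEdge (S : MS α) (a b : α) : Prop := S.R a b = Mult.plus ∨ S.R a b = Mult.one

/-- Edges of the dependency graph: `b` occurs in `R a` with multiplicity in `{*,+,?,1}`. -/
def dEdge (S : MS α) (a b : α) : Prop := S.R a b ≠ Mult.zero

/-- A simulation of the rooted graph `(α, root, E)` in the tree `t`. -/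
def IsSimulation (E : α → α → Prop) (root : α) (t : UTree α) (R : α → UTree α → Prop) : Prop :=
  R root t ∧ (∀ a s, R a s → s.lab = a) ∧
  (∀ a s, R a s → ∀ b, E a b → ∃ s' ∈ s.children, R b s')

/-- One fuse step: two sibling nodes with the same label are merged into a single node
whose children are the children of both (applied anywhere in the tree). -/
inductive Fuse : UTree α → UTree α → Prop where
  | here {a b : α} {l₁ l₂ l₃ cs₁ cs₂ : List (UTree α)} :
      Fuse (UTree.node a (l₁ ++ UTree.node b cs₁ :: l₂ ++ UTree.node b cs₂ :: l₃))
           (UTree.node a (l₁ ++ UTree.node b (cs₁ ++ cs₂) :: l₂ ++ l₃))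
  | there {a : α} {s s' : UTree α} {l₁ l₂ : List (UTree α)} :
      Fuse s s' → Fuse (UTree.node a (l₁ ++ s :: l₂)) (UTree.node a (l₁ ++ s' :: l₂))

/-- One add step: an arbitrary new subtree is attached as an additional child of some
node of the tree. -/
inductive AddOp : UTree α → UTree α → Prop where
  | here {a : α} {s : UTree α} {l : List (UTree α)} :
      AddOp (UTree.node a l) (UTree.node a (s :: l))
  | there {a : α} {s s' : UTree α} {l₁ l₂ : List (UTree α)} :
      AddOp s s' → AddOp (UTree.node a (l₁ ++ s :: l₂)) (UTree.node a (l₁ ++ s' :: l₂))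

/-! Every word of `dmeLang E` is consistent with the triple `(CE E, NE E, PE E)`, and the three
inclusions carry consistency with the triple of `E₂` over to consistency with that of `E₁`. So the
heart of the matter is that, for normalized `E`, consistency with its triple characterizes
`dmeLang E`.

Since no symbol occurs in two disjunctions, a word lies in `dmeLang E` iff it vanishes
off the symbols of `E` and its restriction to the symbols of each `D^M` lies in the language of
`D^M`. For `M = 1`, the conflicts in `CE E` let at most one symbol of `D` occur, `NE E` gives it an
admissible count, and `PE E` forbids the empty restriction when no symbol of `D` admits `0`. For
`M = +` every symbol of `D` has multiplicity `1`, so any restriction in which some symbol of `D`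
occurs (which `PE E` demands) is a sum of single letters. -/

noncomputable def restrictWord (w : UWord α) (S : List α) : UWord α :=
  fun a => if a ∈ S then w a else 0

@[simp] lemma sumWords_cons (u : UWord α) (ws : List (UWord α)) (a : α) :
    sumWords (u :: ws) a = u a + sumWords ws a := by
  simp [sumWords]

@[simp] lemma sumWords_singleton (u : UWord α) : sumWords [u] = u :=
  funext fun a => by simp [sumWords]

lemma sumWords_append (ws₁ ws₂ : List (UWord α)) (a : α) :
    sumWords (ws₁ ++ ws₂) a = sumWords ws₁ a + sumWords ws₂ a := by
  simp [sumWords]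

lemma sumWords_replicate (n : ℕ) (u : UWord α) (a : α) :
    sumWords (List.replicate n u) a = n * u a := by
  simp [sumWords]

lemma sumWords_eq_zero {ws : List (UWord α)} {a : α} (h : ∀ u ∈ ws, u a = 0) :
    sumWords ws a = 0 :=
  List.sum_eq_zero (by simpa using h)

lemma sumWords_flatMap_replicate_single {l : List α} (hl : l.Nodup) (u : UWord α) :
    sumWords (l.flatMap fun a => List.replicate (u a) (Pi.single a 1)) = restrictWord u l := by
  funext b
  induction l with
  | nil => simp [sumWords, restrictWord]
  | cons a l ih =>
    obtain ⟨ha, hl⟩ := List.nodup_cons.mp hl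
    rw [List.flatMap_cons, sumWords_append, sumWords_replicate, ih hl]
    by_cases hba : b = a
    · subst hba
      simp [restrictWord, ha]
    · simp [restrictWord, hba]

section Disjunctions

variable {D : Disj α}

lemma eq_zero_of_mem_disjLang {v : UWord α} (hv : v ∈ disjLang D) {b : α}
    (hb : b ∉ D.map Prod.fst) : v b = 0 := by
  obtain ⟨q, hq, hvq⟩ := hv
  exact hvq.2 b fun hbq => hb (hbq ▸ List.mem_map_of_mem hq)

lemma eq_of_mem_disjLang {v : UWord α} (hv : v ∈ disjLang D) {a b : α} (ha : v a ≠ 0)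
    (hb : v b ≠ 0) : a = b := by
  obtain ⟨q, -, hvq⟩ := hv
  by_contra hab
  rcases eq_or_ne a q.1 with rfl | haq
  · exact hb (hvq.2 b (Ne.symm hab))
  · exact ha (hvq.2 a haq)

lemma mem_sem_of_mem_disjLang (hD : (D.map Prod.fst).Nodup) {v : UWord α} (hv : v ∈ disjLang D)
    {a : α} {m : Mult} (ham : (a, m) ∈ D) (ha : v a ≠ 0) : v a ∈ m.sem := by
  obtain ⟨⟨b, m'⟩, hq, hvq⟩ := hv
  obtain rfl : b = a := by_contra fun hba => ha (hvq.2 a (Ne.symm hba))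
  obtain rfl : m' = m := congrArg Prod.snd (List.inj_on_of_nodup_map hD hq ham rfl)
  exact hvq.1

lemma powLang_one (L : Set (UWord α)) : powLang L Mult.one = L := by
  ext u
  constructor
  · rintro ⟨ws, hlen, hws, rfl⟩
    obtain ⟨v, rfl⟩ := List.length_eq_one_iff.mp hlen
    rw [sumWords_singleton]
    exact hws v (by simp)
  · intro hu
    exact ⟨[u], rfl, by simpa using hu, (sumWords_singleton u).symm⟩

lemma eq_zero_of_mem_powLang {M : Mult} {u : UWord α} (hu : u ∈ powLang (disjLang D) M)
    {b : α} (hb : b ∉ D.map Prod.fst) : u b = 0 := by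
  obtain ⟨ws, -, hws, rfl⟩ := hu
  exact sumWords_eq_zero fun v hv => eq_zero_of_mem_disjLang (hws v hv) hb

lemma exists_ne_zero_of_mem_powLang {M : Mult} (hM : 0 ∉ M.sem) (hD : ∀ q ∈ D, 0 ∉ q.2.sem)
    {u : UWord α} (hu : u ∈ powLang (disjLang D) M) : ∃ a ∈ D.map Prod.fst, u a ≠ 0 := by
  obtain ⟨ws, hlen, hws, rfl⟩ := hu
  obtain ⟨v, ws, rfl⟩ := List.exists_cons_of_length_pos
    (Nat.pos_of_ne_zero fun h0 => hM (h0 ▸ hlen))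
  obtain ⟨q, hq, hvq⟩ := hws v (by simp)
  refine ⟨q.1, List.mem_map_of_mem hq, ?_⟩
  have hvq₀ : v q.1 ≠ 0 := fun h0 => hD q hq (h0 ▸ hvq.1)
  simp only [sumWords_cons]
  omega

lemma mem_powLang_plus (hD : ∀ q ∈ D, q.2 = Mult.one) (hnd : (D.map Prod.fst).Nodup)
    {u : UWord α} (hsupp : ∀ b ∉ D.map Prod.fst, u b = 0)
    (hpos : ∃ a ∈ D.map Prod.fst, u a ≠ 0) : u ∈ powLang (disjLang D) Mult.plus := by
  refine ⟨(D.map Prod.fst).flatMap fun a => List.replicate (u a) (Pi.single a 1), ?_, ?_, ?_⟩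
  · obtain ⟨a, haD, hua⟩ := hpos
    exact List.length_pos_of_mem
      (List.mem_flatMap.mpr ⟨a, haD, List.mem_replicate.mpr ⟨hua, rfl⟩⟩)
  · intro v hv
    obtain ⟨a, haD, hva⟩ := List.mem_flatMap.mp hv
    obtain rfl := (List.mem_replicate.mp hva).2
    obtain ⟨q, hq, rfl⟩ := List.mem_map.mp haD
    refine ⟨q, hq, by simp [hD q hq, Mult.sem], fun b hb => by simp [hb]⟩
  · rw [sumWords_flatMap_replicate_single hnd]
    funext b
    by_cases hb : b ∈ D.map Prod.fst
    · simp [restrictWord, hb]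
    · simp [restrictWord, hb, hsupp b hb]

end Disjunctions

section Decomposition

variable {E : DME α}

lemma nodup_map_fst_of_mem (hE : (dmeSymbols E).Nodup) {p : Disj α × Mult} (hp : p ∈ E) :
    (p.1.map Prod.fst).Nodup :=
  (List.nodup_flatMap.mp hE).1 p hp

lemma sumWords_eq_zero_of_forall₂ {ws : List (UWord α)}
    (hws : List.Forall₂ (fun p u => u ∈ powLang (disjLang p.1) p.2) E ws) {b : α}
    (hb : b ∉ dmeSymbols E) : sumWords ws b = 0 := by
  induction hws with
  | nil => rfl
  | @cons p u E ws hu _ ih =>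
    simp only [dmeSymbols, List.flatMap_cons, List.mem_append, not_or] at hb
    rw [sumWords_cons, eq_zero_of_mem_powLang hu hb.1, ih hb.2]

lemma eq_zero_of_mem_dmeLang {w : UWord α} (hw : w ∈ dmeLang E) {b : α}
    (hb : b ∉ dmeSymbols E) : w b = 0 := by
  obtain ⟨ws, hws, rfl⟩ := hw
  exact sumWords_eq_zero_of_forall₂ hws hb

/-- The disjunctions of `E` have pairwise disjoint symbols, so restricting to the symbols of one
of them recovers exactly the component it contributed. -/
lemma restrictWord_sumWords_mem_powLang {ws : List (UWord α)}
    (hws : List.Forall₂ (fun p u => u ∈ powLang (disjLang p.1) p.2) E ws)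
    (hE : (dmeSymbols E).Nodup) {p : Disj α × Mult} (hp : p ∈ E) :
    restrictWord (sumWords ws) (p.1.map Prod.fst) ∈ powLang (disjLang p.1) p.2 := by
  induction hws with
  | nil => cases hp
  | @cons p₀ u₀ E ws hu₀ hws ih =>
    simp only [dmeSymbols, List.flatMap_cons] at hE
    obtain ⟨-, hE, hdisj⟩ := List.nodup_append.mp hE
    rcases List.mem_cons.mp hp with rfl | hp
    · convert hu₀ using 1
      funext a
      by_cases ha : a ∈ p.1.map Prod.fst
      · have hws₀ := sumWords_eq_zero_of_forall₂ hws fun haE => hdisj a ha a haE rfl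
        simp [restrictWord, ha, hws₀]
      · simp [restrictWord, ha, eq_zero_of_mem_powLang hu₀ ha]
    · convert ih hE hp using 1
      funext a
      by_cases ha : a ∈ p.1.map Prod.fst
      · have haE : a ∈ dmeSymbols E := List.mem_flatMap.mpr ⟨p, hp, ha⟩
        simp [restrictWord, ha, eq_zero_of_mem_powLang hu₀ fun ha₀ => hdisj a ha₀ a haE rfl]
      · simp [restrictWord, ha]

lemma sumWords_map_restrictWord (hE : (dmeSymbols E).Nodup) (w : UWord α) :
    sumWords (E.map fun p => restrictWord w (p.1.map Prod.fst)) =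
      restrictWord w (dmeSymbols E) := by
  funext b
  induction E with
  | nil => simp [sumWords, restrictWord, dmeSymbols]
  | cons p E ih =>
    simp only [dmeSymbols, List.flatMap_cons] at hE ih ⊢
    obtain ⟨-, hE, hdisj⟩ := List.nodup_append.mp hE
    rw [List.map_cons, sumWords_cons, ih hE]
    by_cases hb : b ∈ p.1.map Prod.fst
    · have hbE : b ∉ E.flatMap fun p => p.1.map Prod.fst := fun hbE => hdisj b hb b hbE rfl
      simp [restrictWord, hb, hbE]
    · simp [restrictWord, hb]

theorem mem_dmeLang_iff (hE : (dmeSymbols E).Nodup) {w : UWord α} :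
    w ∈ dmeLang E ↔ (∀ b ∉ dmeSymbols E, w b = 0) ∧
      ∀ p ∈ E, restrictWord w (p.1.map Prod.fst) ∈ powLang (disjLang p.1) p.2 := by
  constructor
  · intro hw
    obtain ⟨ws, hws, rfl⟩ := hw
    exact ⟨fun b => sumWords_eq_zero_of_forall₂ hws,
      fun p => restrictWord_sumWords_mem_powLang hws hE⟩
  · rintro ⟨hsupp, hcomp⟩
    refine ⟨_, List.forall₂_map_right_iff.mpr (List.forall₂_same.mpr hcomp), ?_⟩
    rw [sumWords_map_restrictWord hE]
    funext b
    by_cases hb : b ∈ dmeSymbols E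
    · simp [restrictWord, hb]
    · simp [restrictWord, hb, hsupp b hb]

end Decomposition

section Triple

variable {E : DME α} {D : Disj α}

lemma mk_mem_CE_of_mem_one (hE : (dmeSymbols E).Nodup) (hD : (D, Mult.one) ∈ E) {a b : α}
    (ha : a ∈ D.map Prod.fst) (hb : b ∈ D.map Prod.fst) (hab : a ≠ b) : (a, b) ∈ CE E := by
  rintro ⟨u, hu, hua, hub⟩
  have hv := ((mem_dmeLang_iff hE).mp hu).2 _ hD
  rw [powLang_one] at hv
  exact hab (eq_of_mem_disjLang hv (by simpa [restrictWord, ha]) (by simpa [restrictWord, hb]))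

lemma mem_sem_of_mk_mem_NE (hE : (dmeSymbols E).Nodup) (hD : (D, Mult.one) ∈ E) {a : α}
    {m : Mult} (ham : (a, m) ∈ D) {n : ℕ} (hn : n ≠ 0) (hN : (a, n) ∈ NE E) : n ∈ m.sem := by
  obtain ⟨u, hu, rfl : u a = n⟩ := hN
  have hv := ((mem_dmeLang_iff hE).mp hu).2 _ hD
  rw [powLang_one] at hv
  have ha : a ∈ D.map Prod.fst := List.mem_map_of_mem ham
  simpa [restrictWord, ha] using
    mem_sem_of_mem_disjLang (nodup_map_fst_of_mem hE hD) hv ham (by simpa [restrictWord, ha])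

lemma setOf_mem_map_fst_mem_PE (hE : (dmeSymbols E).Nodup) {M : Mult} (hD : (D, M) ∈ E)
    (hM : 0 ∉ M.sem) (hD₀ : ∀ q ∈ D, 0 ∉ q.2.sem) : {a | a ∈ D.map Prod.fst} ∈ PE E := by
  intro u hu
  obtain ⟨a, ha, hua⟩ :=
    exists_ne_zero_of_mem_powLang hM hD₀ (((mem_dmeLang_iff hE).mp hu).2 _ hD)
  exact ⟨a, ha, by simpa [restrictWord, ha] using hua⟩

lemma ConsTriple.mono {w : UWord α} {C C' : Set (α × α)} {N N' : Set (α × ℕ)}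
    {P P' : Set (Set α)} (hw : ConsTriple w C N P) (hC : C' ⊆ C) (hN : N ⊆ N') (hP : P' ⊆ P) :
    ConsTriple w C' N' P' :=
  ⟨fun p hp => hw.1 p (hC hp), fun a => hN (hw.2.1 a), fun X hX => hw.2.2 X (hP hX)⟩

lemma consTriple_of_mem_dmeLang {w : UWord α} (hw : w ∈ dmeLang E) :
    ConsTriple w (CE E) (NE E) (PE E) :=
  ⟨fun _ hp hne => hp ⟨w, hw, hne⟩, fun _ => ⟨w, hw, rfl⟩, fun _ hX => hX w hw⟩

lemma restrictWord_mem_powLang_one_of_consTriple (hE : (dmeSymbols E).Nodup) {w : UWord α}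
    (hw : ConsTriple w (CE E) (NE E) (PE E)) (hD : (D, Mult.one) ∈ E) :
    restrictWord w (D.map Prod.fst) ∈ powLang (disjLang D) Mult.one := by
  rw [powLang_one]
  by_cases hex : ∃ a ∈ D.map Prod.fst, w a ≠ 0
  · obtain ⟨a, ha, hwa⟩ := hex
    obtain ⟨⟨a, m⟩, ham, rfl⟩ := List.mem_map.mp ha
    refine ⟨(a, m), ham, ?_, fun b hba => ?_⟩
    · simpa [restrictWord, ha] using mem_sem_of_mk_mem_NE hE hD ham hwa (hw.2.1 a)
    · by_cases hb : b ∈ D.map Prod.fst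
      · have hab := mk_mem_CE_of_mem_one hE hD ha hb (Ne.symm hba)
        simpa [restrictWord, hb] using fun hwb => hw.1 _ hab ⟨hwa, hwb⟩
      · simp [restrictWord, hb]
  · push Not at hex
    have hzero : restrictWord w (D.map Prod.fst) = 0 := by
      funext b
      simpa [restrictWord] using hex b
    obtain ⟨q, hq, hq₀⟩ : ∃ q ∈ D, 0 ∈ q.2.sem := by
      by_contra! hD₀
      obtain ⟨a, ha, hwa⟩ :=
        hw.2.2 _ (setOf_mem_map_fst_mem_PE hE hD (by simp [Mult.sem]) hD₀)
      exact hwa (hex a ha)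
    rw [hzero]
    exact ⟨q, hq, hq₀, fun _ _ => rfl⟩

lemma restrictWord_mem_powLang_plus_of_consTriple (hE : (dmeSymbols E).Nodup)
    (hone : ∀ q ∈ D, q.2 = Mult.one) {w : UWord α} (hw : ConsTriple w (CE E) (NE E) (PE E))
    (hD : (D, Mult.plus) ∈ E) :
    restrictWord w (D.map Prod.fst) ∈ powLang (disjLang D) Mult.plus := by
  refine mem_powLang_plus hone (nodup_map_fst_of_mem hE hD)
    (fun b hb => by simp [restrictWord, hb]) ?_
  have hreq := setOf_mem_map_fst_mem_PE hE hD (by simp [Mult.sem])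
    fun q hq => by simp [hone q hq, Mult.sem]
  obtain ⟨a, ha : a ∈ D.map Prod.fst, hwa⟩ := hw.2.2 _ hreq
  exact ⟨a, ha, by rwa [restrictWord, if_pos ha]⟩

theorem mem_dmeLang_of_consTriple (hE : Normalized E) {w : UWord α}
    (hw : ConsTriple w (CE E) (NE E) (PE E)) : w ∈ dmeLang E := by
  refine (mem_dmeLang_iff hE.1).mpr ⟨fun b hb => ?_, fun ⟨D, M⟩ hD => ?_⟩
  · obtain ⟨u, hu, hub : u b = w b⟩ := hw.2.1 b
    exact hub ▸ eq_zero_of_mem_dmeLang hu hb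
  · by_cases hM : M = Mult.one
    · subst hM
      exact restrictWord_mem_powLang_one_of_consTriple hE.1 hw hD
    · obtain ⟨rfl, hone⟩ := (hE.2 _ hD).2.1 hM
      exact restrictWord_mem_powLang_plus_of_consTriple hE.1 hone hw hD

end Triple

lemma CE_anti {E₁ E₂ : DME α} (h : dmeLang E₂ ⊆ dmeLang E₁) : CE E₁ ⊆ CE E₂ :=
  fun _ hp ⟨w, hw, hne⟩ => hp ⟨w, h hw, hne⟩

lemma NE_mono {E₁ E₂ : DME α} (h : dmeLang E₂ ⊆ dmeLang E₁) : NE E₂ ⊆ NE E₁ :=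
  fun _ ⟨w, hw, hwa⟩ => ⟨w, h hw, hwa⟩

lemma PE_anti {E₁ E₂ : DME α} (h : dmeLang E₂ ⊆ dmeLang E₁) : PE E₁ ⊆ PE E₂ :=
  fun _ hX w hw => hX w (h hw)

theorem dme_containment_iff_triple_inclusions_general
    {α : Type} (E₁ E₂ : DME α) (h₁ : Normalized E₁) :
    dmeLang E₂ ⊆ dmeLang E₁ ↔
      (CE E₁ ⊆ CE E₂ ∧ NE E₂ ⊆ NE E₁ ∧ PE E₁ ⊆ PE E₂) := by
  refine ⟨fun h => ⟨CE_anti h, NE_mono h, PE_anti h⟩, ?_⟩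
  rintro ⟨hC, hN, hP⟩ w hw
  exact mem_dmeLang_of_consTriple h₁ ((consTriple_of_mem_dmeLang hw).mono hC hN hP)

/-- Lemma 3: language containment of normalized disjunctive multiplicity
expressions is characterized by inclusions of the characterizing triples. -/
theorem dme_containment_iff_triple_inclusions
    {α : Type} (E₁ E₂ : DME α) (h₁ : Normalized E₁) (h₂ : Normalized E₂) :
    dmeLang E₂ ⊆ dmeLang E₁ ↔
      (CE E₁ ⊆ CE E₂ ∧ NE E₂ ⊆ NE E₁ ∧ PE E₁ ⊆ PE E₂) :=
  dme_containment_iff_triple_inclusions_general E₁ E₂ h₁
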